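/- Let A and B be finitely generated abelian groups. Let R₁, …, R_r ∈ A be ℤ-linearly independent elements generating a finite-index subgroup of A, and let S₁, …, S_s ∈ B be ℤ-linearly independent elements generating a finite-index subgroup of B. Let P₁, …, P_m ∈ A and Q₁, …, Q_m ∈ B, and suppose that for each k = 1, …, m there exist nonzero integers d_k, e_k and integers a_{k,1}, …, a_{k,r} and b_{k,1}, …, b_{k,s} such that d_k·P_k = a_{k,1}R₁ + ⋯ + a_{k,r}R_r in A and e_k·Q_k = b_{k,1}S₁ + ⋯ + b_{k,s}S_s in B. If the m vectors v_k = ((a_{k,i}·b_{k,j})/(d_k·e_k))_{1≤i≤r, 1≤j≤s} in ℚ^{rs} are linearly independent over ℚ, then the elements P₁ ⊗ Q₁, …, P_m ⊗ Q_m are ℤ-linearly independent in A ⊗_ℤ B. -/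

import Mathlib

open TensorProduct

lemma exists_coord_map (A : Type*) [AddCommGroup A]
    (r : ℕ) (R : Fin r → A)
    (hRli : LinearIndependent ℤ R)
    (hRfi : (AddSubgroup.closure (Set.range R)).FiniteIndex) :
    ∃ f : A →ₗ[ℤ] (Fin r → ℚ), ∀ i j, f (R i) j = if i = j then 1 else 0 := by
  classical
  set S := nonZeroDivisors ℤ
  let g : A →ₗ[ℤ] ℚ ⊗[ℤ] A := TensorProduct.mk ℤ ℚ A 1
  have hbc : IsBaseChange ℚ g := TensorProduct.isBaseChange ℤ A ℚ
  have hloc : IsLocalizedModule S g := (isLocalizedModule_iff_isBaseChange S ℚ g).mpr hbc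
  have hind : LinearIndependent ℚ (g ∘ R) := hRli.of_isLocalizedModule ℚ S g
  have hmem : ∀ mm : A, g mm ∈ Submodule.span ℚ (Set.range (g ∘ R)) := by
    intro mm
    set n := (AddSubgroup.closure (Set.range R)).index with hn
    have hn0 : ((n : ℤ) : ℚ) ≠ 0 := by
      exact_mod_cast Int.natCast_ne_zero.mpr hRfi.index_ne_zero
    have h1 : n • mm ∈ AddSubgroup.closure (Set.range R) :=
      AddSubgroup.nsmul_index_mem _ mm
    rw [← Submodule.span_int_eq_addSubgroupClosure, Submodule.mem_toAddSubgroup] at h1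
    have h2 : (n : ℤ) • mm ∈ Submodule.span ℤ (Set.range R) := by
      simpa [natCast_zsmul] using h1
    have h3 : g ((n : ℤ) • mm) ∈ Submodule.span ℚ (Set.range (g ∘ R)) := by
      have := Submodule.apply_mem_span_image_of_mem_span (s := Set.range R) g h2
      refine Submodule.span_le_restrictScalars ℤ ℚ _ ?_
      rwa [← Set.range_comp] at this
    have h4 : g mm = (((n : ℤ) : ℚ))⁻¹ • g ((n : ℤ) • mm) := by
      rw [map_zsmul, ← Int.cast_smul_eq_zsmul ℚ, smul_smul, inv_mul_cancel₀ hn0, one_smul]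
    rw [h4]
    exact Submodule.smul_mem _ _ h3
  have hspan : Submodule.span ℚ (Set.range (g ∘ R)) = ⊤ := by
    rw [eq_top_iff]
    rintro x -
    obtain ⟨⟨m, s⟩, rfl⟩ := IsLocalizedModule.mk'_surjective S g x
    show IsLocalizedModule.mk' g m s ∈ _
    have h5 : ((s : ℤ) : ℚ) ≠ 0 := by
      exact_mod_cast nonZeroDivisors.coe_ne_zero s
    have h6 : IsLocalizedModule.mk' g m s = (((s : ℤ) : ℚ))⁻¹ • g m := by
      rw [← IsLocalizedModule.mk'_cancel' g m s, Submonoid.smul_def,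
        ← Int.cast_smul_eq_zsmul ℚ, smul_smul, inv_mul_cancel₀ h5, one_smul]
    rw [h6]
    exact Submodule.smul_mem _ _ (hmem m)
  let bA : Module.Basis (Fin r) ℚ (ℚ ⊗[ℤ] A) := Module.Basis.mk hind (le_of_eq hspan.symm)
  refine ⟨(bA.equivFun.toLinearMap.restrictScalars ℤ) ∘ₗ g, fun i j => ?_⟩
  have : g (R i) = bA i := by rw [Module.Basis.mk_apply]; rfl
  simp [this, Module.Basis.equivFun_self]

/-- Abstract correctness of Algorithm 1: if `R₁, …, R_r` generate a finite-index subgroup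
of `A` and `S₁, …, S_s` a finite-index subgroup of `B`, and points `P_k ∈ A`, `Q_k ∈ B`
satisfy `d_k • P_k = ∑ a_{k,i} • R_i` and `e_k • Q_k = ∑ b_{k,j} • S_j` with
`d_k, e_k ≠ 0`, and the vectors `v_k = (a_{k,i} b_{k,j} / (d_k e_k))_{i,j} ∈ ℚ^{rs}` are
linearly independent over `ℚ`, then the elements `P_k ⊗ Q_k` are `ℤ`-linearly
independent in `A ⊗_ℤ B`. -/
theorem linearIndependent_tensor_of_coeff_vectors
    (A B : Type*) [AddCommGroup A] [AddCommGroup B]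
    [Module.Finite ℤ A] [Module.Finite ℤ B]
    (r s m : ℕ) (R : Fin r → A) (S : Fin s → B)
    (hRli : LinearIndependent ℤ R)
    (hRfi : (AddSubgroup.closure (Set.range R)).FiniteIndex)
    (hSli : LinearIndependent ℤ S)
    (hSfi : (AddSubgroup.closure (Set.range S)).FiniteIndex)
    (P : Fin m → A) (Q : Fin m → B)
    (d e : Fin m → ℤ) (hd : ∀ k, d k ≠ 0) (he : ∀ k, e k ≠ 0)
    (a : Fin m → Fin r → ℤ) (b : Fin m → Fin s → ℤ)
    (hP : ∀ k, d k • P k = ∑ i, a k i • R i)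
    (hQ : ∀ k, e k • Q k = ∑ j, b k j • S j)
    (v : Fin m → Fin r × Fin s → ℚ)
    (hv : ∀ k i j, v k (i, j) = ((a k i : ℚ) * (b k j : ℚ)) / ((d k : ℚ) * (e k : ℚ)))
    (hli : LinearIndependent ℚ v) :
    LinearIndependent ℤ (fun k => (P k ⊗ₜ[ℤ] Q k : A ⊗[ℤ] B)) := by
  classical
  obtain ⟨fA, hfA⟩ := exists_coord_map A r R hRli hRfi
  obtain ⟨fB, hfB⟩ := exists_coord_map B s S hSli hSfi
  have hfP : ∀ k i, fA (P k) i = (a k i : ℚ) / (d k : ℚ) := by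
    intro k i
    have hdk : ((d k : ℤ) : ℚ) ≠ 0 := by exact_mod_cast hd k
    have h := congrFun (congrArg fA (hP k)) i
    rw [map_zsmul, map_sum] at h
    simp only [map_zsmul, Finset.sum_apply, Pi.smul_apply, hfA, zsmul_eq_mul, Pi.mul_apply, Pi.intCast_apply, mul_ite, mul_one,
      mul_zero, Finset.sum_ite_eq', Finset.mem_univ, if_true] at h
    rw [eq_div_iff hdk, mul_comm, h]
  have hfQ : ∀ k j, fB (Q k) j = (b k j : ℚ) / (e k : ℚ) := by
    intro k j
    have hek : ((e k : ℤ) : ℚ) ≠ 0 := by exact_mod_cast he k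
    have h := congrFun (congrArg fB (hQ k)) j
    rw [map_zsmul, map_sum] at h
    simp only [map_zsmul, Finset.sum_apply, Pi.smul_apply, hfB, zsmul_eq_mul, Pi.mul_apply, Pi.intCast_apply, mul_ite, mul_one,
      mul_zero, Finset.sum_ite_eq', Finset.mem_univ, if_true] at h
    rw [eq_div_iff hek, mul_comm, h]
  let T : A →ₗ[ℤ] B →ₗ[ℤ] (Fin r × Fin s → ℚ) :=
    LinearMap.mk₂ ℤ (fun x y p => fA x p.1 * fB y p.2)
      (fun x₁ x₂ y => by funext p; simp [add_mul])
      (fun c x y => by funext p; simp [smul_mul_assoc]; ring)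
      (fun x y₁ y₂ => by funext p; simp [mul_add])
      (fun c x y => by funext p; simp [mul_smul_comm]; ring)
  let φ : A ⊗[ℤ] B →ₗ[ℤ] (Fin r × Fin s → ℚ) := TensorProduct.lift T
  have hφ : ∀ k, φ (P k ⊗ₜ[ℤ] Q k) = v k := by
    intro k
    funext p
    obtain ⟨i, j⟩ := p
    show fA (P k) i * fB (Q k) j = v k (i, j)
    rw [hfP, hfQ, hv, div_mul_div_comm]
  rw [Fintype.linearIndependent_iff] at hli ⊢
  intro c hc k
  have h0 : ∑ k, (c k : ℚ) • v k = 0 := by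
    have := congrArg φ hc
    rw [map_sum, map_zero] at this
    simp only [map_zsmul, hφ] at this
    simpa [Int.cast_smul_eq_zsmul] using this
  exact_mod_cast hli (fun k => (c k : ℚ)) h0 k
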